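/- Fix u₀ ∈ ℝ^n and let K^ε = (K_A^ε, K_B^ε) be the Lyapunov–Perron map and ρ(ε) := εL_f/(γ − εγ_A') + L_g/(γ_B − γ). Then for all Φ₁, Φ₂ ∈ C_γ^− one has ‖K^ε(Φ₁) − K^ε(Φ₂)‖_γ^− ≤ ρ(ε)·‖Φ₁ − Φ₂‖_γ^−; in particular, if ρ(ε) < 1 then K^ε is a contraction on C_γ^−. -/

import Mathlib

open MeasureTheory Set Filter

noncomputable section

/-- `ℝ^n` with the Euclidean norm. -/
abbrev Vec (n : ℕ) := EuclideanSpace ℝ (Fin n)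

/-- Action of an `n × n` real matrix on `ℝ^n`. -/
noncomputable def mApply {n : ℕ} (M : Matrix (Fin n) (Fin n) ℝ) (x : Vec n) : Vec n :=
  Matrix.toEuclideanLin M x

/-- The matrix exponential `e^{tA}`. -/
noncomputable def expM {n : ℕ} (A : Matrix (Fin n) (Fin n) ℝ) (t : ℝ) :
    Matrix (Fin n) (Fin n) ℝ :=
  NormedSpace.exp (t • A)

/-- The norm `‖u‖_γ^- = sup_{t ≤ 0} e^{γ t} ‖u t‖` on `C_γ^-`. -/
noncomputable def cNorm {n : ℕ} (γ : ℝ) (u : ℝ → Vec n) : ℝ :=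
  sSup ((fun t => Real.exp (γ * t) * ‖u t‖) '' Iic (0:ℝ))

/-- Membership in the Banach space `C_γ^-`: continuity on `(-∞, 0]` together with
finiteness of the norm `sup_{t ≤ 0} e^{γ t} ‖u t‖`. -/
def memCneg {n : ℕ} (γ : ℝ) (u : ℝ → Vec n) : Prop :=
  ContinuousOn u (Iic 0) ∧
    BddAbove ((fun t => Real.exp (γ * t) * ‖u t‖) '' Iic (0:ℝ))

/-- The `A`-component of the Lyapunov–Perron map:
`K_A^ε(Φ)(t) = e^{εAt} u₀ + ε ∫_0^t e^{εA(t-s)} f(u(s)+η(s), v(s)+ξ(s)) ds`. -/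
noncomputable def KA {n : ℕ} (A : Matrix (Fin n) (Fin n) ℝ) (ε : ℝ) (u₀ : Vec n)
    (f : Vec n → Vec n → Vec n) (η ξ u v : ℝ → Vec n) (t : ℝ) : Vec n :=
  mApply (expM A (ε * t)) u₀ +
    ε • ∫ s in (0:ℝ)..t, mApply (expM A (ε * (t - s))) (f (u s + η s) (v s + ξ s))

/-- The `B`-component of the Lyapunov–Perron map:
`K_B^ε(Φ)(t) = ∫_{-∞}^t e^{B(t-s)} g(u(s)+η(s), v(s)+ξ(s)) ds`. -/
noncomputable def KB {n : ℕ} (B : Matrix (Fin n) (Fin n) ℝ)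
    (g : Vec n → Vec n → Vec n) (η ξ u v : ℝ → Vec n) (t : ℝ) : Vec n :=
  ∫ s in Iic t, mApply (expM B (t - s)) (g (u s + η s) (v s + ξ s))

/-! Both components are estimated pointwise in the weighted norm. By the Lipschitz bound on the
nonlinearity and the exponential estimates for the two semigroups, the integrand of
`K_A^ε(Φ₁)(t) - K_A^ε(Φ₂)(t)` at `r ∈ [t, 0]` has norm at most
`L_f ‖Φ₁ - Φ₂‖ e^{-εγ_A'(t-r)} e^{-γr}`, and that of `K_B` at `r ≤ t` at most
`L_g ‖Φ₁ - Φ₂‖ e^{-γ_B(t-r)} e^{-γr}`. After multiplication by `e^{γt}` these kernels integrate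
to at most `1/(γ - εγ_A')` and exactly `1/(γ_B - γ)`.

The improper integrals defining `K_B` converge by the linear growth of `g`; only then do they split
as the integral of a difference (otherwise they take the junk value `0`). -/

open Real

theorem continuous_uncurry_of_norm_sub_le {E F G : Type*} [SeminormedAddCommGroup E]
    [SeminormedAddCommGroup F] [SeminormedAddCommGroup G] {f : E → F → G} {L : ℝ} (hL : 0 ≤ L)
    (hf : ∀ x₁ y₁ x₂ y₂, ‖f x₁ y₁ - f x₂ y₂‖ ≤ L * (‖x₁ - x₂‖ + ‖y₁ - y₂‖)) :
    Continuous (Function.uncurry f) := by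
  refine (LipschitzWith.of_dist_le_mul (K := ⟨2 * L, by positivity⟩) fun p q => ?_).continuous
  simp only [dist_eq_norm]
  calc ‖f p.1 p.2 - f q.1 q.2‖ ≤ L * (‖(p - q).1‖ + ‖(p - q).2‖) := hf _ _ _ _
    _ ≤ L * (‖p - q‖ + ‖p - q‖) := by gcongr <;> [exact norm_fst_le _; exact norm_snd_le _]
    _ = 2 * L * ‖p - q‖ := by ring

theorem exp_kernel_eq (a γ t r : ℝ) :
    exp (-a * (t - r)) * exp (-(γ * r)) = exp (-(a * t)) * exp ((a - γ) * r) := by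
  rw [← exp_add, ← exp_add]; ring_nf

theorem exp_mul_integral_exp_kernel {a γ : ℝ} (hγa : a ≠ γ) (t : ℝ) :
    exp (γ * t) * ∫ r in t..0, exp (-a * (t - r)) * exp (-(γ * r)) =
      (1 - exp ((γ - a) * t)) / (γ - a) := by
  have hne : a - γ ≠ 0 := sub_ne_zero.2 hγa
  simp_rw [exp_kernel_eq, intervalIntegral.integral_const_mul,
    intervalIntegral.integral_comp_mul_left (fun r => exp r) hne, integral_exp, mul_zero, exp_zero,
    smul_eq_mul]
  rw [← mul_assoc, ← exp_add, show γ * t + -(a * t) = (γ - a) * t by ring]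
  have hinv : exp ((γ - a) * t) * exp (t * (a - γ)) = 1 := by
    rw [← exp_add, ← exp_zero]; ring_nf
  field_simp
  linear_combination (a - γ) * hinv

theorem exp_mul_integral_exp_kernel_le {a γ : ℝ} (hγa : a < γ) (t : ℝ) :
    exp (γ * t) * ∫ r in t..0, exp (-a * (t - r)) * exp (-(γ * r)) ≤ 1 / (γ - a) := by
  rw [exp_mul_integral_exp_kernel hγa.ne]
  exact div_le_div_of_nonneg_right (by linarith [exp_pos ((γ - a) * t)]) (by linarith)

theorem integrableOn_exp_kernel_Iic {a γ : ℝ} (hγa : γ < a) (s : ℝ) :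
    IntegrableOn (fun r => exp (-a * (s - r)) * exp (-(γ * r))) (Iic s) := by
  simp_rw [exp_kernel_eq]
  exact (integrableOn_exp_mul_Iic (sub_pos.2 hγa) s).const_mul _

theorem exp_mul_integral_exp_kernel_Iic {a γ : ℝ} (hγa : γ < a) (s : ℝ) :
    exp (γ * s) * ∫ r in Iic s, exp (-a * (s - r)) * exp (-(γ * r)) = 1 / (a - γ) := by
  simp_rw [exp_kernel_eq, integral_const_mul, integral_exp_mul_Iic (sub_pos.2 hγa)]
  rw [← mul_assoc, ← mul_div_assoc, ← exp_add, ← exp_add,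
    show γ * s + -(a * s) + (a - γ) * s = 0 by ring, exp_zero]

section Semigroup

variable {n : ℕ}

theorem continuous_expM (A : Matrix (Fin n) (Fin n) ℝ) : Continuous (expM A) :=
  letI := Matrix.linftyOpNormedRing (n := Fin n) (α := ℝ)
  letI := Matrix.linftyOpNormedAlgebra (R := ℝ) (n := Fin n) (α := ℝ)
  continuous_iff_continuousAt.2 fun t => (hasDerivAt_exp_smul_const A t).continuousAt

theorem continuous_mApply :
    Continuous fun p : Matrix (Fin n) (Fin n) ℝ × Vec n => mApply p.1 p.2 := by
  simp only [mApply, Matrix.toEuclideanLin, Matrix.toLpLin_apply]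
  fun_prop

theorem mApply_sub (M : Matrix (Fin n) (Fin n) ℝ) (x y : Vec n) :
    mApply M (x - y) = mApply M x - mApply M y :=
  map_sub _ x y

theorem ContinuousOn.mApply_expM {A : Matrix (Fin n) (Fin n) ℝ} {c : ℝ → ℝ} (hc : Continuous c)
    {w : ℝ → Vec n} {s : Set ℝ} (hw : ContinuousOn w s) :
    ContinuousOn (fun r => mApply (expM A (c r)) (w r)) s := by
  have h := (((continuous_expM A).comp hc).continuousOn (s := s)).prodMk hw
  exact (continuous_mApply.comp_continuousOn h :)

end Semigroup

section WeightedNorm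

variable {n : ℕ} {γ : ℝ} {u v : ℝ → Vec n}

theorem cNorm_nonneg (γ : ℝ) (u : ℝ → Vec n) : 0 ≤ cNorm γ u :=
  Real.sSup_nonneg (by rintro _ ⟨t, -, rfl⟩; positivity)

namespace memCneg

theorem exp_mul_norm_le_cNorm (hu : memCneg γ u) {r : ℝ} (hr : r ≤ 0) :
    exp (γ * r) * ‖u r‖ ≤ cNorm γ u :=
  le_csSup hu.2 ⟨r, hr, rfl⟩

theorem norm_le_cNorm (hu : memCneg γ u) {r : ℝ} (hr : r ≤ 0) :
    ‖u r‖ ≤ exp (-(γ * r)) * cNorm γ u := by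
  calc ‖u r‖ = exp (-(γ * r)) * (exp (γ * r) * ‖u r‖) := by
        rw [← mul_assoc, ← exp_add, neg_add_cancel, exp_zero, one_mul]
    _ ≤ exp (-(γ * r)) * cNorm γ u := by gcongr; exact hu.exp_mul_norm_le_cNorm hr

theorem add (hu : memCneg γ u) (hv : memCneg γ v) : memCneg γ (fun t => u t + v t) := by
  refine ⟨hu.1.add hv.1, cNorm γ u + cNorm γ v, ?_⟩
  rintro _ ⟨r, hr, rfl⟩
  calc exp (γ * r) * ‖u r + v r‖ ≤ exp (γ * r) * ‖u r‖ + exp (γ * r) * ‖v r‖ := by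
        rw [← mul_add]; gcongr; exact norm_add_le _ _
    _ ≤ cNorm γ u + cNorm γ v :=
        add_le_add (hu.exp_mul_norm_le_cNorm hr) (hv.exp_mul_norm_le_cNorm hr)

theorem sub (hu : memCneg γ u) (hv : memCneg γ v) : memCneg γ (fun t => u t - v t) := by
  refine ⟨hu.1.sub hv.1, cNorm γ u + cNorm γ v, ?_⟩
  rintro _ ⟨r, hr, rfl⟩
  calc exp (γ * r) * ‖u r - v r‖ ≤ exp (γ * r) * ‖u r‖ + exp (γ * r) * ‖v r‖ := by
        rw [← mul_add]; gcongr; exact norm_sub_le _ _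
    _ ≤ cNorm γ u + cNorm γ v :=
        add_le_add (hu.exp_mul_norm_le_cNorm hr) (hv.exp_mul_norm_le_cNorm hr)

end memCneg

end WeightedNorm

section LyapunovPerron

variable {n : ℕ} {γ L : ℝ} {F : Vec n → Vec n → Vec n} {η ξ u₁ v₁ u₂ v₂ : ℝ → Vec n}

theorem norm_mApply_nonlinearity_sub_le {M : Matrix (Fin n) (Fin n) ℝ} {a τ : ℝ}
    (hM : ∀ x, ‖mApply M x‖ ≤ exp (-a * τ) * ‖x‖) (hL : 0 ≤ L)
    (hF : ∀ x₁ y₁ x₂ y₂, ‖F x₁ y₁ - F x₂ y₂‖ ≤ L * (‖x₁ - x₂‖ + ‖y₁ - y₂‖))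
    (hu : memCneg γ (fun r => u₁ r - u₂ r)) (hv : memCneg γ (fun r => v₁ r - v₂ r))
    {r : ℝ} (hr : r ≤ 0) :
    ‖mApply M (F (u₁ r + η r) (v₁ r + ξ r)) - mApply M (F (u₂ r + η r) (v₂ r + ξ r))‖ ≤
      L * (cNorm γ (fun r => u₁ r - u₂ r) + cNorm γ (fun r => v₁ r - v₂ r)) *
        (exp (-a * τ) * exp (-(γ * r))) := by
  have hFr : ‖F (u₁ r + η r) (v₁ r + ξ r) - F (u₂ r + η r) (v₂ r + ξ r)‖ ≤
      L * (cNorm γ (fun r => u₁ r - u₂ r) + cNorm γ (fun r => v₁ r - v₂ r)) *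
        exp (-(γ * r)) := by
    calc _ ≤ L * (‖u₁ r - u₂ r‖ + ‖v₁ r - v₂ r‖) := by
          simpa only [add_sub_add_right_eq_sub] using
            hF (u₁ r + η r) (v₁ r + ξ r) (u₂ r + η r) (v₂ r + ξ r)
      _ ≤ L * (exp (-(γ * r)) * cNorm γ (fun r => u₁ r - u₂ r) +
            exp (-(γ * r)) * cNorm γ (fun r => v₁ r - v₂ r)) := by
          gcongr
          exacts [hu.norm_le_cNorm hr, hv.norm_le_cNorm hr]
      _ = _ := by ring
  calc _ = ‖mApply M (F (u₁ r + η r) (v₁ r + ξ r) - F (u₂ r + η r) (v₂ r + ξ r))‖ := by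
        rw [mApply_sub]
    _ ≤ exp (-a * τ) * (L * (cNorm γ (fun r => u₁ r - u₂ r) + cNorm γ (fun r => v₁ r - v₂ r)) *
          exp (-(γ * r))) := (hM _).trans (by gcongr)
    _ = _ := by ring

theorem intervalIntegrable_mApply_expM {A : Matrix (Fin n) (Fin n) ℝ} {c : ℝ → ℝ}
    (hc : Continuous c) (hFcont : Continuous (Function.uncurry F)) {w z : ℝ → Vec n}
    (hw : ContinuousOn w (Iic 0)) (hz : ContinuousOn z (Iic 0)) {t : ℝ} (ht : t ≤ 0) :
    IntervalIntegrable (fun r => mApply (expM A (c r)) (F (w r) (z r))) volume 0 t := by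
  refine (ContinuousOn.mApply_expM hc ((hFcont.comp_continuousOn (hw.prodMk hz)).mono ?_)
    ).intervalIntegrable
  rw [uIcc_of_ge ht]
  exact Icc_subset_Iic_self

theorem exp_mul_norm_KA_sub_le {A : Matrix (Fin n) (Fin n) ℝ} {γA' ε : ℝ}
    (hA : ∀ t ≤ (0:ℝ), ∀ x : Vec n, ‖mApply (expM A t) x‖ ≤ exp (-γA' * t) * ‖x‖)
    (hε : 0 < ε) (hεγ : ε * γA' < γ) (hL : 0 ≤ L)
    (hF : ∀ x₁ y₁ x₂ y₂, ‖F x₁ y₁ - F x₂ y₂‖ ≤ L * (‖x₁ - x₂‖ + ‖y₁ - y₂‖))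
    (hη : memCneg γ η) (hξ : memCneg γ ξ) (hu₁ : memCneg γ u₁) (hv₁ : memCneg γ v₁)
    (hu₂ : memCneg γ u₂) (hv₂ : memCneg γ v₂) (u₀ : Vec n) {t : ℝ} (ht : t ≤ 0) :
    exp (γ * t) * ‖KA A ε u₀ F η ξ u₁ v₁ t - KA A ε u₀ F η ξ u₂ v₂ t‖ ≤
      ε * L / (γ - ε * γA') *
        (cNorm γ (fun r => u₁ r - u₂ r) + cNorm γ (fun r => v₁ r - v₂ r)) := by
  set D := cNorm γ (fun r => u₁ r - u₂ r) + cNorm γ (fun r => v₁ r - v₂ r)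
  set k : ℝ → ℝ := fun r => exp (-(ε * γA') * (t - r)) * exp (-(γ * r))
  have hFcont := continuous_uncurry_of_norm_sub_le hL hF
  have hint : ∀ {u v : ℝ → Vec n}, memCneg γ u → memCneg γ v → IntervalIntegrable
      (fun r => mApply (expM A (ε * (t - r))) (F (u r + η r) (v r + ξ r))) volume 0 t :=
    fun hu hv => intervalIntegrable_mApply_expM (by fun_prop) hFcont (hu.add hη).1 (hv.add hξ).1 ht
  have hbound : ∀ r ∈ Ioc t 0,
      ‖mApply (expM A (ε * (t - r))) (F (u₁ r + η r) (v₁ r + ξ r)) -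
        mApply (expM A (ε * (t - r))) (F (u₂ r + η r) (v₂ r + ξ r))‖ ≤ L * D * k r := by
    intro r hr
    refine norm_mApply_nonlinearity_sub_le (fun x => ?_) hL hF (hu₁.sub hu₂) (hv₁.sub hv₂) hr.2
    rw [show -(ε * γA') * (t - r) = -γA' * (ε * (t - r)) by ring]
    exact hA _ (mul_nonpos_of_nonneg_of_nonpos hε.le (by linarith [hr.1])) x
  have hintegral : ‖∫ r in (0:ℝ)..t,
      (mApply (expM A (ε * (t - r))) (F (u₁ r + η r) (v₁ r + ξ r)) -
        mApply (expM A (ε * (t - r))) (F (u₂ r + η r) (v₂ r + ξ r)))‖ ≤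
      L * D * ∫ r in t..0, k r := by
    rw [intervalIntegral.integral_symm, norm_neg, ← intervalIntegral.integral_const_mul]
    exact intervalIntegral.norm_integral_le_of_norm_le ht (ae_of_all _ hbound)
      ((by fun_prop : Continuous fun r => L * D * k r).intervalIntegrable _ _)
  calc exp (γ * t) * ‖KA A ε u₀ F η ξ u₁ v₁ t - KA A ε u₀ F η ξ u₂ v₂ t‖
      = ε * (exp (γ * t) * ‖∫ r in (0:ℝ)..t,
          (mApply (expM A (ε * (t - r))) (F (u₁ r + η r) (v₁ r + ξ r)) -
            mApply (expM A (ε * (t - r))) (F (u₂ r + η r) (v₂ r + ξ r)))‖) := by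
        rw [KA, KA, add_sub_add_left_eq_sub, ← smul_sub,
          ← intervalIntegral.integral_sub (hint hu₁ hv₁) (hint hu₂ hv₂), norm_smul,
          Real.norm_of_nonneg hε.le]
        ring
    _ ≤ ε * (L * D * (exp (γ * t) * ∫ r in t..0, k r)) := by
        rw [mul_left_comm (L * D)]
        gcongr
    _ ≤ ε * (L * D * (1 / (γ - ε * γA'))) := by
        have : 0 ≤ D := add_nonneg (cNorm_nonneg _ _) (cNorm_nonneg _ _)
        gcongr
        exact exp_mul_integral_exp_kernel_le hεγ t
    _ = ε * L / (γ - ε * γA') * D := by ring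

theorem integrableOn_Iic_mApply_expM {B : Matrix (Fin n) (Fin n) ℝ} {γB C : ℝ}
    (hB : ∀ t ≥ (0:ℝ), ∀ y : Vec n, ‖mApply (expM B t) y‖ ≤ exp (-γB * t) * ‖y‖)
    (hγ : 0 < γ) (hγγB : γ < γB) (hL : 0 ≤ L) (hC : 0 ≤ C)
    (hFcont : Continuous (Function.uncurry F))
    (hFgrow : ∀ x y, ‖F x y‖ ≤ L * (C + ‖x‖ + ‖y‖)) {w z : ℝ → Vec n}
    (hw : memCneg γ w) (hz : memCneg γ z) {s : ℝ} (hs : s ≤ 0) :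
    IntegrableOn (fun r => mApply (expM B (s - r)) (F (w r) (z r))) (Iic s) := by
  have hsub : Iic s ⊆ Iic 0 := Iic_subset_Iic.2 hs
  have hcont : ContinuousOn (fun r => mApply (expM B (s - r)) (F (w r) (z r))) (Iic s) :=
    ContinuousOn.mApply_expM (by fun_prop)
      ((hFcont.comp_continuousOn (hw.1.prodMk hz.1)).mono hsub)
  refine Integrable.mono' ((integrableOn_exp_kernel_Iic hγγB s).const_mul
    (L * (C + cNorm γ w + cNorm γ z))) (hcont.aestronglyMeasurable measurableSet_Iic)
    (ae_restrict_of_forall_mem measurableSet_Iic fun r (hr : r ≤ s) => ?_)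
  have hr0 : r ≤ 0 := hr.trans hs
  have hone : 1 ≤ exp (-(γ * r)) := one_le_exp (by nlinarith)
  calc ‖mApply (expM B (s - r)) (F (w r) (z r))‖
      ≤ exp (-γB * (s - r)) * (L * (C + ‖w r‖ + ‖z r‖)) :=
        (hB _ (sub_nonneg.2 hr) _).trans (by gcongr; exact hFgrow _ _)
    _ ≤ exp (-γB * (s - r)) * (L * (exp (-(γ * r)) * C + exp (-(γ * r)) * cNorm γ w +
          exp (-(γ * r)) * cNorm γ z)) := by
        gcongr
        · exact le_mul_of_one_le_left hC hone
        · exact hw.norm_le_cNorm hr0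
        · exact hz.norm_le_cNorm hr0
    _ = L * (C + cNorm γ w + cNorm γ z) * (exp (-γB * (s - r)) * exp (-(γ * r))) := by ring

theorem exp_mul_norm_KB_sub_le {B : Matrix (Fin n) (Fin n) ℝ} {γB C : ℝ}
    (hB : ∀ t ≥ (0:ℝ), ∀ y : Vec n, ‖mApply (expM B t) y‖ ≤ exp (-γB * t) * ‖y‖)
    (hγ : 0 < γ) (hγγB : γ < γB) (hL : 0 ≤ L) (hC : 0 ≤ C)
    (hF : ∀ x₁ y₁ x₂ y₂, ‖F x₁ y₁ - F x₂ y₂‖ ≤ L * (‖x₁ - x₂‖ + ‖y₁ - y₂‖))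
    (hFgrow : ∀ x y, ‖F x y‖ ≤ L * (C + ‖x‖ + ‖y‖))
    (hη : memCneg γ η) (hξ : memCneg γ ξ) (hu₁ : memCneg γ u₁) (hv₁ : memCneg γ v₁)
    (hu₂ : memCneg γ u₂) (hv₂ : memCneg γ v₂) {s : ℝ} (hs : s ≤ 0) :
    exp (γ * s) * ‖KB B F η ξ u₁ v₁ s - KB B F η ξ u₂ v₂ s‖ ≤
      L / (γB - γ) * (cNorm γ (fun r => u₁ r - u₂ r) + cNorm γ (fun r => v₁ r - v₂ r)) := by
  set D := cNorm γ (fun r => u₁ r - u₂ r) + cNorm γ (fun r => v₁ r - v₂ r)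
  set k : ℝ → ℝ := fun r => exp (-γB * (s - r)) * exp (-(γ * r))
  have hFcont := continuous_uncurry_of_norm_sub_le hL hF
  have hint : ∀ {u v : ℝ → Vec n}, memCneg γ u → memCneg γ v → IntegrableOn
      (fun r => mApply (expM B (s - r)) (F (u r + η r) (v r + ξ r))) (Iic s) :=
    fun hu hv => integrableOn_Iic_mApply_expM hB hγ hγγB hL hC hFcont hFgrow
      (hu.add hη) (hv.add hξ) hs
  have hbound : ∀ r ∈ Iic s,
      ‖mApply (expM B (s - r)) (F (u₁ r + η r) (v₁ r + ξ r)) -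
        mApply (expM B (s - r)) (F (u₂ r + η r) (v₂ r + ξ r))‖ ≤ L * D * k r :=
    fun r (hr : r ≤ s) => norm_mApply_nonlinearity_sub_le (hB _ (sub_nonneg.2 hr)) hL hF
      (hu₁.sub hu₂) (hv₁.sub hv₂) (hr.trans hs)
  calc exp (γ * s) * ‖KB B F η ξ u₁ v₁ s - KB B F η ξ u₂ v₂ s‖
      ≤ exp (γ * s) * ∫ r in Iic s, L * D * k r := by
        rw [KB, KB, ← integral_sub (hint hu₁ hv₁) (hint hu₂ hv₂)]
        gcongr
        exact norm_integral_le_of_norm_le ((integrableOn_exp_kernel_Iic hγγB s).const_mul _)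
          (ae_restrict_of_forall_mem measurableSet_Iic hbound)
    _ = L / (γB - γ) * D := by
        rw [integral_const_mul, mul_left_comm, exp_mul_integral_exp_kernel_Iic hγγB]
        ring

end LyapunovPerron

theorem statement3_general
    (n : ℕ)
    (A B : Matrix (Fin n) (Fin n) ℝ) (γA' γB : ℝ)
    (hA : ∀ t ≤ (0:ℝ), ∀ x : Vec n, ‖mApply (expM A t) x‖ ≤ Real.exp (-γA' * t) * ‖x‖)
    (hB : ∀ t ≥ (0:ℝ), ∀ y : Vec n, ‖mApply (expM B t) y‖ ≤ Real.exp (-γB * t) * ‖y‖)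
    (γ ε : ℝ) (hγ : 0 < γ) (hγγB : γ < γB) (hε : 0 < ε) (hεγ : ε * γA' < γ)
    (f g : Vec n → Vec n → Vec n) (Lf Lg Cg : ℝ)
    (hLf : 0 < Lf) (hLg : 0 < Lg) (hCg : 0 < Cg)
    (hfLip : ∀ x₁ y₁ x₂ y₂ : Vec n,
      ‖f x₁ y₁ - f x₂ y₂‖ ≤ Lf * (‖x₁ - x₂‖ + ‖y₁ - y₂‖))
    (hgLip : ∀ x₁ y₁ x₂ y₂ : Vec n,
      ‖g x₁ y₁ - g x₂ y₂‖ ≤ Lg * (‖x₁ - x₂‖ + ‖y₁ - y₂‖))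
    (hgGrow : ∀ x y : Vec n, ‖g x y‖ ≤ Lg * (Cg + ‖x‖ + ‖y‖))
    (η ξ : ℝ → Vec n) (hη : memCneg γ η) (hξ : memCneg γ ξ)
    (u₀ : Vec n)
    (u₁ v₁ u₂ v₂ : ℝ → Vec n)
    (hu₁ : memCneg γ u₁) (hv₁ : memCneg γ v₁) (hu₂ : memCneg γ u₂) (hv₂ : memCneg γ v₂) :
    ∀ t ≤ (0:ℝ), ∀ s ≤ (0:ℝ),
      Real.exp (γ * t) * ‖KA A ε u₀ f η ξ u₁ v₁ t - KA A ε u₀ f η ξ u₂ v₂ t‖ +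
          Real.exp (γ * s) * ‖KB B g η ξ u₁ v₁ s - KB B g η ξ u₂ v₂ s‖ ≤
        (ε * Lf / (γ - ε * γA') + Lg / (γB - γ)) *
          (cNorm γ (fun r => u₁ r - u₂ r) + cNorm γ (fun r => v₁ r - v₂ r)) := by
  intro t ht s hs
  rw [add_mul]
  exact add_le_add
    (exp_mul_norm_KA_sub_le hA hε hεγ hLf.le hfLip hη hξ hu₁ hv₁ hu₂ hv₂ u₀ ht)
    (exp_mul_norm_KB_sub_le hB hγ hγγB hLg.le hCg.le hgLip hgGrow hη hξ hu₁ hv₁ hu₂ hv₂ hs)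

/-- the Lyapunov–Perron map is `ρ(ε)`-Lipschitz on `C_γ^-`; in particular it
is a contraction when `ρ(ε) < 1`. -/
theorem statement3
    (n : ℕ) (hn : 0 < n)
    (A B : Matrix (Fin n) (Fin n) ℝ) (γA' γB : ℝ) (hγA' : 0 < γA') (hγB : 0 < γB)
    (hA : ∀ t ≤ (0:ℝ), ∀ x : Vec n, ‖mApply (expM A t) x‖ ≤ Real.exp (-γA' * t) * ‖x‖)
    (hB : ∀ t ≥ (0:ℝ), ∀ y : Vec n, ‖mApply (expM B t) y‖ ≤ Real.exp (-γB * t) * ‖y‖)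
    (γ ε : ℝ) (hγ : 0 < γ) (hγγB : γ < γB) (hε : 0 < ε) (hεγ : ε * γA' < γ)
    (f g : Vec n → Vec n → Vec n) (Lf Lg Cf Cg : ℝ)
    (hLf : 0 < Lf) (hLg : 0 < Lg) (hCf : 0 < Cf) (hCg : 0 < Cg)
    (hfLip : ∀ x₁ y₁ x₂ y₂ : Vec n,
      ‖f x₁ y₁ - f x₂ y₂‖ ≤ Lf * (‖x₁ - x₂‖ + ‖y₁ - y₂‖))
    (hgLip : ∀ x₁ y₁ x₂ y₂ : Vec n,
      ‖g x₁ y₁ - g x₂ y₂‖ ≤ Lg * (‖x₁ - x₂‖ + ‖y₁ - y₂‖))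
    (hfGrow : ∀ x y : Vec n, ‖f x y‖ ≤ Lf * (Cf + ‖x‖ + ‖y‖))
    (hgGrow : ∀ x y : Vec n, ‖g x y‖ ≤ Lg * (Cg + ‖x‖ + ‖y‖))
    (η ξ : ℝ → Vec n) (hη : memCneg γ η) (hξ : memCneg γ ξ)
    (u₀ : Vec n)
    (u₁ v₁ u₂ v₂ : ℝ → Vec n)
    (hu₁ : memCneg γ u₁) (hv₁ : memCneg γ v₁) (hu₂ : memCneg γ u₂) (hv₂ : memCneg γ v₂) :
    ∀ t ≤ (0:ℝ), ∀ s ≤ (0:ℝ),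
      Real.exp (γ * t) * ‖KA A ε u₀ f η ξ u₁ v₁ t - KA A ε u₀ f η ξ u₂ v₂ t‖ +
          Real.exp (γ * s) * ‖KB B g η ξ u₁ v₁ s - KB B g η ξ u₂ v₂ s‖ ≤
        (ε * Lf / (γ - ε * γA') + Lg / (γB - γ)) *
          (cNorm γ (fun r => u₁ r - u₂ r) + cNorm γ (fun r => v₁ r - v₂ r)) :=
  statement3_general n A B γA' γB hA hB γ ε hγ hγγB hε hεγ f g Lf Lg Cg hLf hLg hCg hfLip hgLip
    hgGrow η ξ hη hξ u₀ u₁ v₁ u₂ v₂ hu₁ hv₁ hu₂ hv₂
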